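/- (Congruence-free inverse semigroups with zero) An inverse semigroup S with zero is congruence-free (its only congruences are the equality relation and the universal relation) if and only if all three of the following hold: (1) S is fundamental; (2) S is 0-simple, i.e., the only ideals of S are {0} and S; (3) the semilattice of idempotents of S is 0-disjunctive. -/
import Mathlib

set_option linter.unusedSectionVars false
set_option maxHeartbeats 1000000

namespace CFWork

variable {S : Type*} [Semigroup S]

section basic
variable (inv : S → S)
    (h1 : ∀ a : S, a * inv a * a = a)
    (h2 : ∀ a : S, inv a * a * inv a = inv a)
    (huniq : ∀ a b : S, a * b * a = a → b * a * b = b → b = inv a)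

include h1 h2 huniq

lemma inv_invol (b : S) : inv (inv b) = b :=
  (huniq (inv b) b (h2 b) (h1 b)).symm

lemma idem_inv {e : S} (he : e * e = e) : inv e = e :=
  (huniq e e (by rw [he, he]) (by rw [he, he])).symm

lemma idem_mul {e f : S} (he : e * e = e) (hf : f * f = f) :
    (e * f) * (e * f) = e * f := by
  set b := inv (e * f) with hb
  have key : f * b * e = b := by
    apply huniq
    · -- (e*f) * (f*b*e) * (e*f) = e*f
      have : e * f * (f * b * e) * (e * f) = e * f * b * (e * f) := by
        calc e * f * (f * b * e) * (e * f) = e * (f * f) * b * (e * e) * f := by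
              simp only [mul_assoc]
          _ = e * f * b * (e * f) := by rw [hf, he]; simp only [mul_assoc]
      rw [this, hb, h1]
    · have : f * b * e * (e * f) * (f * b * e) = f * (b * (e * f) * b) * e := by
        calc f * b * e * (e * f) * (f * b * e)
            = f * b * (e * e) * (f * f) * b * e := by simp only [mul_assoc]
          _ = f * (b * (e * f) * b) * e := by rw [he, hf]; simp only [mul_assoc]
      rw [this, hb, h2]
  have hbb : b * b = b := by
    calc b * b = f * b * e * (f * b * e) := by rw [key]
      _ = f * (b * (e * f) * b) * e := by simp only [mul_assoc]
      _ = f * b * e := by rw [hb, h2]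
      _ = b := key
  have : e * f = b := by
    rw [hb]
    calc e * f = inv (inv (e * f)) := (inv_invol inv h1 h2 huniq _).symm
      _ = inv b := by rw [hb]
      _ = b := idem_inv inv h1 h2 huniq hbb
  rw [this]; exact hbb

lemma idem_comm {e f : S} (he : e * e = e) (hf : f * f = f) :
    e * f = f * e := by
  have hef := idem_mul inv h1 h2 huniq he hf
  have h3 : e * f * (f * e) * (e * f) = e * f := by
    calc e * f * (f * e) * (e * f) = e * (f * f) * (e * e) * f := by
          simp only [mul_assoc]
      _ = (e * f) * (e * f) := by rw [hf, he]; simp only [mul_assoc]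
      _ = e * f := hef
  have h4 : f * e * (e * f) * (f * e) = f * e := by
    calc f * e * (e * f) * (f * e) = f * (e * e) * (f * f) * e := by
          simp only [mul_assoc]
      _ = (f * e) * (f * e) := by rw [he, hf]; simp only [mul_assoc]
      _ = f * e := idem_mul inv h1 h2 huniq hf he
  calc e * f = inv (e * f) := (idem_inv inv h1 h2 huniq hef).symm
    _ = f * e := (huniq (e * f) (f * e) h3 h4).symm

lemma li (a : S) : (inv a * a) * (inv a * a) = inv a * a := by
  calc (inv a * a) * (inv a * a) = (inv a * a * inv a) * a := by
        simp only [mul_assoc]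
    _ = inv a * a := by rw [h2]

lemma ri (a : S) : (a * inv a) * (a * inv a) = a * inv a := by
  calc (a * inv a) * (a * inv a) = (a * inv a * a) * inv a := by
        simp only [mul_assoc]
    _ = a * inv a := by rw [h1]

lemma inv_mul_rev (a b : S) : inv (a * b) = inv b * inv a := by
  symm; apply huniq
  · calc a * b * (inv b * inv a) * (a * b)
        = a * ((b * inv b) * (inv a * a)) * b := by simp only [mul_assoc]
      _ = a * ((inv a * a) * (b * inv b)) * b := by
          rw [idem_comm inv h1 h2 huniq (ri inv h1 h2 huniq b) (li inv h1 h2 huniq a)]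
      _ = (a * inv a * a) * (b * inv b * b) := by simp only [mul_assoc]
      _ = a * b := by rw [h1, h1]
  · calc inv b * inv a * (a * b) * (inv b * inv a)
        = inv b * ((inv a * a) * (b * inv b)) * inv a := by simp only [mul_assoc]
      _ = inv b * ((b * inv b) * (inv a * a)) * inv a := by
          rw [idem_comm inv h1 h2 huniq (li inv h1 h2 huniq a) (ri inv h1 h2 huniq b)]
      _ = (inv b * b * inv b) * (inv a * a * inv a) := by simp only [mul_assoc]
      _ = inv b * inv a := by rw [h2, h2]

lemma conj_idem {e : S} (he : e * e = e) (a : S) :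
    (inv a * e * a) * (inv a * e * a) = inv a * e * a := by
  calc (inv a * e * a) * (inv a * e * a)
      = inv a * (e * (a * inv a)) * (e * a) := by simp only [mul_assoc]
    _ = inv a * ((a * inv a) * e) * (e * a) := by
        rw [idem_comm inv h1 h2 huniq he (ri inv h1 h2 huniq a)]
    _ = (inv a * a * inv a) * (e * e) * a := by simp only [mul_assoc]
    _ = inv a * e * a := by rw [h2, he]

lemma conj_idem' {e : S} (he : e * e = e) (a : S) :
    (a * e * inv a) * (a * e * inv a) = a * e * inv a := by
  calc (a * e * inv a) * (a * e * inv a)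
      = a * (e * (inv a * a)) * (e * inv a) := by simp only [mul_assoc]
    _ = a * ((inv a * a) * e) * (e * inv a) := by
        rw [idem_comm inv h1 h2 huniq he (li inv h1 h2 huniq a)]
    _ = (a * inv a * a) * (e * e) * inv a := by simp only [mul_assoc]
    _ = a * e * inv a := by rw [h1, he]


section cong
variable (ρ : S → S → Prop) (hE : Equivalence ρ)
    (hC : ∀ a b c d : S, ρ a b → ρ c d → ρ (a * c) (b * d))

include hE hC

lemma hL (c : S) {a b : S} (h : ρ a b) : ρ (c * a) (c * b) := hC _ _ _ _ (hE.refl c) h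
lemma hR (c : S) {a b : S} (h : ρ a b) : ρ (a * c) (b * c) := hC _ _ _ _ h (hE.refl c)

include h1 h2 huniq

/-- Lallement's lemma, relational form. -/
lemma lall {a : S} (h : ρ (a * a) a) : ∃ e, e * e = e ∧ ρ e a := by
  set x := inv (a * a) with hx
  have hidem : a * x * a * (a * x * a) = a * x * a := by
    calc a * x * a * (a * x * a) = a * (x * (a * a) * x) * a := by
          simp only [mul_assoc]
      _ = a * x * a := by rw [hx, h2]
  refine ⟨a * x * a, hidem, ?_⟩
  have k : ρ ((a * a) * (x * (a * a))) (a * (x * a)) :=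
    hC _ _ _ _ h (hL inv h1 h2 huniq ρ hE hC x h)
  have e1 : (a * a) * (x * (a * a)) = a * a := by
    have := h1 (a * a); rw [← hx] at this
    calc (a * a) * (x * (a * a)) = a * a * x * (a * a) := by
          simp only [mul_assoc]
      _ = a * a := this
  rw [e1] at k
  have : ρ (a * (x * a)) a := hE.trans (hE.symm k) h
  simpa only [mul_assoc] using this

/-- ρ-idempotents commute modulo ρ. -/
lemma rcomm {p q : S} (hp : ρ (p * p) p) (hq : ρ (q * q) q) :
    ρ (p * q) (q * p) := by
  obtain ⟨e, he, hep⟩ := lall inv h1 h2 huniq ρ hE hC hp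
  obtain ⟨f, hf, hfq⟩ := lall inv h1 h2 huniq ρ hE hC hq
  have k1 : ρ (p * q) (e * f) := hC _ _ _ _ (hE.symm hep) (hE.symm hfq)
  have k2 : ρ (f * e) (q * p) := hC _ _ _ _ hfq hep
  exact hE.trans k1 (by rw [idem_comm inv h1 h2 huniq he hf]; exact k2)

/-- A congruence preserves inverses. -/
lemma rinv {a b : S} (hab : ρ a b) : ρ (inv a) (inv b) := by
  set u := inv a with hu
  set v := inv b with hv
  have hau : a * u * a = a := by rw [hu]; exact h1 a
  have hua : u * a * u = u := by rw [hu]; exact h2 a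
  have hbv : b * v * b = b := by rw [hv]; exact h1 b
  have h_ava : ρ (a * v * a) a := by
    have k : ρ (a * v * a) (b * v * b) :=
      hC _ _ _ _ (hC _ _ _ _ hab (hE.refl v)) hab
    rw [hbv] at k
    exact hE.trans k (hE.symm hab)
  have h_vav : ρ (v * a * v) v := by
    have k : ρ (v * a * v) (v * b * v) :=
      hC _ _ _ _ (hC _ _ _ _ (hE.refl v) hab) (hE.refl v)
    have hvbv : v * b * v = v := by rw [hv]; exact h2 b
    rw [hvbv] at k
    exact k
  have i_ua : (u * a) * (u * a) = u * a := by
    calc (u * a) * (u * a) = (u * a * u) * a := by simp only [mul_assoc]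
      _ = u * a := by rw [hua]
  have i_au : (a * u) * (a * u) = a * u := by
    calc (a * u) * (a * u) = (a * u * a) * u := by simp only [mul_assoc]
      _ = a * u := by rw [hau]
  have i_va : ρ ((v * a) * (v * a)) (v * a) := by
    have e : (v * a) * (v * a) = v * (a * v * a) := by simp only [mul_assoc]
    rw [e]
    simpa only [mul_assoc] using hL inv h1 h2 huniq ρ hE hC v h_ava
  have i_av : ρ ((a * v) * (a * v)) (a * v) := by
    have e : (a * v) * (a * v) = (a * v * a) * v := by simp only [mul_assoc]
    rw [e]
    exact hR inv h1 h2 huniq ρ hE hC v h_ava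
  -- star2 : u ρ v*a*u
  have star2 : ρ u (v * a * u) := by
    have s1 : ρ u ((u * a) * ((v * a) * u)) := by
      have k : ρ (u * a * u) (u * (a * v * a) * u) :=
        hC _ _ _ _ (hL inv h1 h2 huniq ρ hE hC u (hE.symm h_ava)) (hE.refl u)
      rw [hua] at k
      have e2 : u * (a * v * a) * u = (u * a) * ((v * a) * u) := by
        simp only [mul_assoc]
      rw [e2] at k
      exact k
    have sw : ρ ((u * a) * (v * a)) ((v * a) * (u * a)) :=
      rcomm inv h1 h2 huniq ρ hE hC (by rw [i_ua]; exact hE.refl _) i_va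
    have s2 : ρ ((u * a) * ((v * a) * u)) ((v * a) * ((u * a) * u)) := by
      simpa only [mul_assoc] using hR inv h1 h2 huniq ρ hE hC u sw
    have e3 : (v * a) * ((u * a) * u) = v * (a * u * a) * u := by
      simp only [mul_assoc]
    rw [e3, hau] at s2
    exact hE.trans s1 s2
  -- star1 : v ρ v*a*u
  have star1 : ρ v (v * a * u) := by
    have e4 : v * ((a * u) * (a * v)) = v * a * v := by
      calc v * ((a * u) * (a * v)) = v * (a * u * a) * v := by
            simp only [mul_assoc]
        _ = v * a * v := by rw [hau]
    have s1 : ρ v (v * ((a * u) * (a * v))) := by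
      rw [e4]; exact hE.symm h_vav
    have sw : ρ ((a * u) * (a * v)) ((a * v) * (a * u)) :=
      rcomm inv h1 h2 huniq ρ hE hC (by rw [i_au]; exact hE.refl _) i_av
    have s2 : ρ (v * ((a * u) * (a * v))) (v * ((a * v) * (a * u))) :=
      hL inv h1 h2 huniq ρ hE hC v sw
    have e5 : v * ((a * v) * (a * u)) = (v * a * v) * (a * u) := by
      simp only [mul_assoc]
    have s3 : ρ ((v * a * v) * (a * u)) (v * (a * u)) :=
      hR inv h1 h2 huniq ρ hE hC (a * u) h_vav
    have e6 : v * (a * u) = v * a * u := by simp only [mul_assoc]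
    rw [e6] at s3
    exact hE.trans (hE.trans s1 s2) (e5 ▸ s3)
  exact hE.trans star2 (hE.symm star1)


end cong
end basic
end CFWork
open CFWork in
/-- An inverse semigroup with zero is congruence-free iff it is fundamental,
`0`-simple, and its semilattice of idempotents is `0`-disjunctive. -/
theorem congruence_free_characterization {S : Type*} [Semigroup S] (inv : S → S)
    (h1 : ∀ a : S, a * inv a * a = a)
    (h2 : ∀ a : S, inv a * a * inv a = inv a)
    (huniq : ∀ a b : S, a * b * a = a → b * a * b = b → b = inv a)
    (z : S) (hz : ∀ s : S, z * s = z ∧ s * z = z) :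
    (∀ ρ : S → S → Prop, Equivalence ρ →
        (∀ a b c d : S, ρ a b → ρ c d → ρ (a * c) (b * d)) →
        (∀ s t : S, ρ s t → s = t) ∨ (∀ s t : S, ρ s t)) ↔
    ((∀ s : S, (∀ e : S, e * e = e → s * e = e * s) → s * s = s) ∧
     (∀ I : Set S, I.Nonempty →
        (∀ a ∈ I, ∀ s : S, s * a ∈ I ∧ a * s ∈ I) → I = {z} ∨ I = Set.univ) ∧
     (∀ e f : S, e * e = e → f * f = f → f ≠ z → f = f * e → f ≠ e →
        ∃ g : S, g * g = g ∧ g ≠ z ∧ g = g * e ∧ f * g = z)) := by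
  have hzz : z * z = z := (hz z).1
  have hinvz : inv z = z := idem_inv inv h1 h2 huniq hzz
  constructor
  · -- congruence-free ⇒ three conditions
    intro CF
    refine ⟨?_, ?_, ?_⟩
    · -- fundamental
      intro s hcomm
      set μ : S → S → Prop := fun a b => ∀ e : S, e * e = e →
        inv a * e * a = inv b * e * b with hμdef
      have hE : Equivalence μ :=
        ⟨fun a e _ => rfl, fun h e he => (h e he).symm,
         fun h h' e he => (h e he).trans (h' e he)⟩
      have hC : ∀ a b c d : S, μ a b → μ c d → μ (a * c) (b * d) := by
        intro a b c d hab hcd e he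
        have key : ∀ x : S,
            inv (x * c) * e * (x * c) = inv c * (inv x * e * x) * c := by
          intro x
          calc inv (x * c) * e * (x * c)
              = (inv c * inv x) * e * (x * c) := by
                rw [inv_mul_rev inv h1 h2 huniq]
            _ = inv c * (inv x * e * x) * c := by simp only [mul_assoc]
        have key2 : ∀ x : S,
            inv (x * d) * e * (x * d) = inv d * (inv x * e * x) * d := by
          intro x
          calc inv (x * d) * e * (x * d)
              = (inv d * inv x) * e * (x * d) := by
                rw [inv_mul_rev inv h1 h2 huniq]
            _ = inv d * (inv x * e * x) * d := by simp only [mul_assoc]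
        calc inv (a * c) * e * (a * c)
            = inv c * (inv a * e * a) * c := key a
          _ = inv c * (inv b * e * b) * c := by rw [hab e he]
          _ = inv d * (inv b * e * b) * d :=
              hcd _ (conj_idem inv h1 h2 huniq he b)
          _ = inv (b * d) * e * (b * d) := (key2 b).symm
      rcases CF μ hE hC with heq | huniv
      · -- μ is equality
        have hs : s = inv s * s := by
          apply heq
          intro e he
          have hq : (inv s * s) * (inv s * s) = inv s * s := li inv h1 h2 huniq s
          have hinvq : inv (inv s * s) = inv s * s := idem_inv inv h1 h2 huniq hq
          have lhs : inv s * e * s = e * (inv s * s) := by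
            calc inv s * e * s = inv s * (e * s) := by simp only [mul_assoc]
              _ = inv s * (s * e) := by rw [← hcomm e he]
              _ = (inv s * s) * e := by simp only [mul_assoc]
              _ = e * (inv s * s) := idem_comm inv h1 h2 huniq hq he
          have rhs : inv (inv s * s) * e * (inv s * s) = e * (inv s * s) := by
            rw [hinvq]
            calc (inv s * s) * e * (inv s * s)
                = (e * (inv s * s)) * (inv s * s) := by
                  rw [idem_comm inv h1 h2 huniq hq he]
              _ = e * ((inv s * s) * (inv s * s)) := by simp only [mul_assoc]
              _ = e * (inv s * s) := by rw [hq]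
          rw [lhs, rhs]
        have := li inv h1 h2 huniq s
        rw [← hs] at this
        exact this
      · -- μ is universal: S = {z}
        have hss : inv s * s = z := by
          have := huniv s z (s * inv s) (ri inv h1 h2 huniq s)
          rw [hinvz] at this
          have rz : z * (s * inv s) * z = z := by
            rw [(hz (s * inv s)).1, hzz]
          rw [rz] at this
          calc inv s * s = (inv s * s * inv s) * s := by rw [h2]
            _ = inv s * (s * inv s) * s := by simp only [mul_assoc]
            _ = z := this
        have hsz : s = z := by
          calc s = s * inv s * s := (h1 s).symm
            _ = s * (inv s * s) := by simp only [mul_assoc]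
            _ = s * z := by rw [hss]
            _ = z := (hz s).2
        rw [hsz, hzz]
    · -- 0-simple
      intro I hne hideal
      have hzI : z ∈ I := by
        obtain ⟨a, ha⟩ := hne
        have := (hideal a ha z).1
        rwa [(hz a).1] at this
      set ρ : S → S → Prop := fun a b => a = b ∨ (a ∈ I ∧ b ∈ I) with hρdef
      have hE : Equivalence ρ := by
        constructor
        · intro a; exact Or.inl rfl
        · rintro a b (rfl | ⟨ha, hb⟩); exacts [Or.inl rfl, Or.inr ⟨hb, ha⟩]
        · rintro a b c (rfl | ⟨ha, hb⟩) (rfl | ⟨hb', hc⟩)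
          · exact Or.inl rfl
          · exact Or.inr ⟨hb', hc⟩
          · exact Or.inr ⟨ha, hb⟩
          · exact Or.inr ⟨ha, hc⟩
      have hC : ∀ a b c d : S, ρ a b → ρ c d → ρ (a * c) (b * d) := by
        rintro a b c d (rfl | ⟨ha, hb⟩) (rfl | ⟨hc, hd⟩)
        · exact Or.inl rfl
        · exact Or.inr ⟨(hideal c hc a).1, (hideal d hd a).1⟩
        · exact Or.inr ⟨(hideal a ha c).2, (hideal b hb c).2⟩
        · exact Or.inr ⟨(hideal a ha c).2, (hideal b hb d).2⟩
      rcases CF ρ hE hC with heq | huniv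
      · left
        ext s
        simp only [Set.mem_singleton_iff]
        constructor
        · intro hs; exact heq s z (Or.inr ⟨hs, hzI⟩)
        · rintro rfl; exact hzI
      · right
        ext s
        simp only [Set.mem_univ, iff_true]
        rcases huniv s z with rfl | ⟨hs, _⟩
        exacts [hzI, hs]
    · -- 0-disjunctive
      intro e f he hf hfz hfe hne
      set ρ : S → S → Prop := fun a b => ∀ x y : S, x * a * y = z ↔ x * b * y = z
        with hρdef
      have hE : Equivalence ρ :=
        ⟨fun a x y => Iff.rfl, fun h x y => (h x y).symm,
         fun h h' x y => (h x y).trans (h' x y)⟩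
      have hC : ∀ a b c d : S, ρ a b → ρ c d → ρ (a * c) (b * d) := by
        intro a b c d hab hcd x y
        have i1 := hab x (c * y)
        have i2 := hcd (x * b) y
        simp only [mul_assoc] at i1 i2 ⊢
        exact i1.trans i2
      have heq : ∀ s t : S, ρ s t → s = t := by
        rcases CF ρ hE hC with heq | huniv
        · exact heq
        · exfalso
          have := (huniv z f f f).1
          rw [(hz f).2, (hz f).1] at this
          have hfff : f * f * f = f := by rw [hf, hf]
          rw [hfff] at this
          exact hfz (this rfl)
      have hef : e * f = f := by
        rw [idem_comm inv h1 h2 huniq he hf, ← hfe]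
      have hwy : (y_ : S) → (y_ * inv y_) * (y_ * inv y_) = y_ * inv y_ :=
        fun y_ => ri inv h1 h2 huniq y_
      have dir : ∀ x y : S, x * e * y = z → x * f * y = z := by
        intro x y hxey
        have key : x * f * y = (x * e * y) * (inv y * f * y) := by
          calc x * f * y
              = x * (e * f) * y := by rw [hef]
            _ = x * e * (f * (y * inv y * y)) := by
                rw [h1 y]; simp only [mul_assoc]
            _ = x * e * ((f * (y * inv y)) * y) := by simp only [mul_assoc]
            _ = x * e * (((y * inv y) * f) * y) := by
                rw [idem_comm inv h1 h2 huniq hf (hwy y)]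
            _ = (x * e * y) * (inv y * f * y) := by simp only [mul_assoc]
        rw [key, hxey, (hz _).1]
      have hnef : ¬ ρ e f := fun h => hne (heq e f h).symm
      simp only [hρdef, not_forall] at hnef
      obtain ⟨x, y, hxy⟩ := hnef
      have hcase : x * f * y = z ∧ ¬ (x * e * y = z) := by
        have d := dir x y
        tauto
      obtain ⟨hxfy, hxey⟩ := hcase
      have hu : (inv x * x) * (inv x * x) = inv x * x := li inv h1 h2 huniq x
      have hwyy : (y * inv y) * (y * inv y) = y * inv y := hwy y
      refine ⟨e * (inv x * x) * (y * inv y), ?_, ?_, ?_, ?_⟩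
      · exact idem_mul inv h1 h2 huniq (idem_mul inv h1 h2 huniq he hu) hwyy
      · -- g ≠ z
        intro hgz
        apply hxey
        have hx' : x * (inv x * x) = x := by
          have := h1 x; simpa only [mul_assoc] using this
        have hy' : (y * inv y) * y = y := h1 y
        calc x * e * y
            = (x * (inv x * x)) * e * ((y * inv y) * y) := by rw [hx', hy']
          _ = x * ((inv x * x) * e * (y * inv y)) * y := by
              simp only [mul_assoc]
          _ = x * (e * (inv x * x) * (y * inv y)) * y := by
              rw [idem_comm inv h1 h2 huniq hu he]
          _ = x * z * y := by rw [hgz]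
          _ = z := by rw [(hz x).2, (hz y).1]
      · -- g = g * e
        symm
        calc (e * (inv x * x) * (y * inv y)) * e
            = e * (inv x * x) * ((y * inv y) * e) := by simp only [mul_assoc]
          _ = e * (inv x * x) * (e * (y * inv y)) := by
              rw [idem_comm inv h1 h2 huniq hwyy he]
          _ = e * ((inv x * x) * e) * (y * inv y) := by simp only [mul_assoc]
          _ = e * (e * (inv x * x)) * (y * inv y) := by
              rw [idem_comm inv h1 h2 huniq hu he]
          _ = (e * e) * (inv x * x) * (y * inv y) := by simp only [mul_assoc]
          _ = e * (inv x * x) * (y * inv y) := by rw [he]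
      · -- f * g = z
        calc f * (e * (inv x * x) * (y * inv y))
            = (f * e) * ((inv x * x) * (y * inv y)) := by simp only [mul_assoc]
          _ = f * ((inv x * x) * (y * inv y)) := by rw [← hfe]
          _ = (f * (inv x * x)) * (y * inv y) := by simp only [mul_assoc]
          _ = ((inv x * x) * f) * (y * inv y) := by
              rw [idem_comm inv h1 h2 huniq hf hu]
          _ = inv x * (x * f * y) * inv y := by simp only [mul_assoc]
          _ = inv x * z * inv y := by rw [hxfy]
          _ = z := by rw [(hz (inv x)).2, (hz (inv y)).1]
  · -- three conditions ⇒ congruence-free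
    rintro ⟨hF, hSim, hD⟩ ρ hE hC
    by_cases hcase : ∀ s t : S, ρ s t → s = t
    · exact Or.inl hcase
    right
    push_neg at hcase
    obtain ⟨a0, b0, hab0, hne0⟩ := hcase
    -- Step A : there exist distinct ρ-related idempotents
    have sepcase : ∃ p q : S, p * p = p ∧ q * q = q ∧ ρ p q ∧ p ≠ q := by
      by_contra hsep
      push_neg at hsep
      apply hne0
      -- ρ is idempotent-separating, hence (fundamental) it is equality
      have genidem : ∀ a b : S, ρ a b →
          (inv b * a) * (inv b * a) = inv b * a := by
        intro a b hab
        have hri : ρ (inv a) (inv b) := rinv inv h1 h2 huniq ρ hE hC hab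
        have q3 : ∀ e : S, e * e = e → a * e * inv a = b * e * inv b := by
          intro e he
          exact hsep _ _ (conj_idem' inv h1 h2 huniq he a)
            (conj_idem' inv h1 h2 huniq he b)
            (hC _ _ _ _ (hC _ _ _ _ hab (hE.refl e)) hri)
        apply hF
        intro e he
        have c1 : (a * e * inv a) * a = a * e := by
          calc (a * e * inv a) * a = a * (e * (inv a * a)) := by
                simp only [mul_assoc]
            _ = a * ((inv a * a) * e) := by
                rw [idem_comm inv h1 h2 huniq he (li inv h1 h2 huniq a)]
            _ = (a * inv a * a) * e := by simp only [mul_assoc]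
            _ = a * e := by rw [h1]
        calc (inv b * a) * e
            = inv b * ((a * e * inv a) * a) := by
              rw [c1]; simp only [mul_assoc]
          _ = inv b * ((b * e * inv b) * a) := by rw [q3 e he]
          _ = ((inv b * b) * e) * (inv b * a) := by simp only [mul_assoc]
          _ = (e * (inv b * b)) * (inv b * a) := by
              rw [idem_comm inv h1 h2 huniq (li inv h1 h2 huniq b) he]
          _ = e * ((inv b * b * inv b) * a) := by simp only [mul_assoc]
          _ = e * (inv b * a) := by rw [h2]
      have hs : (inv b0 * a0) * (inv b0 * a0) = inv b0 * a0 :=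
        genidem a0 b0 hab0
      have hst : inv b0 * a0 = inv a0 * b0 := by
        have ht : (inv a0 * b0) * (inv a0 * b0) = inv a0 * b0 :=
          genidem b0 a0 (hE.symm hab0)
        calc inv b0 * a0 = inv (inv b0 * a0) :=
              (idem_inv inv h1 h2 huniq hs).symm
          _ = inv a0 * inv (inv b0) := inv_mul_rev inv h1 h2 huniq _ _
          _ = inv a0 * b0 := by rw [inv_invol inv h1 h2 huniq]
      have q2 : a0 * inv a0 = b0 * inv b0 :=
        hsep _ _ (ri inv h1 h2 huniq a0) (ri inv h1 h2 huniq b0)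
          (hC _ _ _ _ hab0 (rinv inv h1 h2 huniq ρ hE hC hab0))
      have ea : a0 = b0 * (inv b0 * a0) := by
        calc a0 = a0 * inv a0 * a0 := (h1 a0).symm
          _ = b0 * inv b0 * a0 := by rw [q2]
          _ = b0 * (inv b0 * a0) := by simp only [mul_assoc]
      have eb : b0 = a0 * (inv b0 * a0) := by
        calc b0 = b0 * inv b0 * b0 := (h1 b0).symm
          _ = a0 * inv a0 * b0 := by rw [q2]
          _ = a0 * (inv a0 * b0) := by simp only [mul_assoc]
          _ = a0 * (inv b0 * a0) := by rw [← hst]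
      calc a0 = b0 * (inv b0 * a0) := ea
        _ = (a0 * (inv b0 * a0)) * (inv b0 * a0) := by rw [← eb]
        _ = a0 * ((inv b0 * a0) * (inv b0 * a0)) := by simp only [mul_assoc]
        _ = a0 * (inv b0 * a0) := by rw [hs]
        _ = b0 := eb.symm
    obtain ⟨p, q, hp, hq, hpq, hpqne⟩ := sepcase
    -- Step B : produce a nonzero element ρ-related to z
    have hqp : q * p = p * q := (idem_comm inv h1 h2 huniq hp hq).symm
    have hr : (p * q) * (p * q) = p * q := idem_mul inv h1 h2 huniq hp hq
    have hpr : ρ p (p * q) := by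
      have := hC _ _ _ _ (hE.refl p) hpq; rwa [hp] at this
    have hrq : ρ (p * q) q := by
      have := hC _ _ _ _ hpq (hE.refl q); rwa [hq] at this
    have key : ∃ f0 e0 : S, f0 * f0 = f0 ∧ e0 * e0 = e0 ∧ ρ f0 e0 ∧
        f0 = f0 * e0 ∧ f0 ≠ e0 := by
      by_cases hrp : p * q = p
      · refine ⟨p * q, q, hr, hq, hrq, ?_, ?_⟩
        · calc p * q = p * (q * q) := by rw [hq]
            _ = (p * q) * q := by simp only [mul_assoc]
        · intro h; exact hpqne (hrp.symm.trans h)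
      · refine ⟨p * q, p, hr, hp, hE.symm hpr, ?_, hrp⟩
        symm
        calc (p * q) * p = p * (q * p) := by simp only [mul_assoc]
          _ = p * (p * q) := by rw [hqp]
          _ = (p * p) * q := by simp only [mul_assoc]
          _ = p * q := by rw [hp]
    obtain ⟨f0, e0, hf0, he0, hρf0, hf0e0, hf0ne⟩ := key
    have hwex : ∃ w : S, ρ z w ∧ w ≠ z := by
      by_cases hf0z : f0 = z
      · refine ⟨e0, ?_, ?_⟩
        · rw [← hf0z]; exact hρf0
        · intro h; exact hf0ne (hf0z.trans h.symm)
      · obtain ⟨g, hg, hgz, hge, hfg⟩ := hD e0 f0 he0 hf0 hf0z hf0e0 hf0ne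
        refine ⟨g, ?_, hgz⟩
        have hstep := hL inv h1 h2 huniq ρ hE hC g hρf0
        have e1 : g * f0 = z := (idem_comm inv h1 h2 huniq hg hf0).trans hfg
        rwa [e1, ← hge] at hstep
    obtain ⟨w, hzw, hwz⟩ := hwex
    -- Step C : the ideal {s | ρ z s} is everything
    have hall : ∀ s : S, ρ z s := by
      have hid : ∀ a ∈ {s : S | ρ z s}, ∀ s : S,
          s * a ∈ {s : S | ρ z s} ∧ a * s ∈ {s : S | ρ z s} := by
        intro a ha s
        constructor
        · have := hL inv h1 h2 huniq ρ hE hC s ha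
          rwa [(hz s).2] at this
        · have := hR inv h1 h2 huniq ρ hE hC s ha
          rwa [(hz s).1] at this
      rcases hSim {s : S | ρ z s} ⟨z, hE.refl z⟩ hid with h | h
      · exfalso
        apply hwz
        have hwI : w ∈ {s : S | ρ z s} := hzw
        rw [h] at hwI
        exact hwI
      · intro s
        have : s ∈ {s : S | ρ z s} := by rw [h]; trivial
        exact this
    exact fun s t => hE.trans (hE.symm (hall s)) (hall t)
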